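/- Let U ⊆ ℂ be open, let σ : ℂ → ℝ be smooth and positive on U with Δ(log σ) = 2σ on U, and let h : ℂ → ℂ be smooth on U with Im(h(z)) > 0 for all z ∈ U, satisfying the harmonic map equation ∂_z̄(h_z)(z) + (i / Im(h(z)))·h_z(z)·h_z̄(z) = 0 on U. Define H(z) = |h_z(z)|² / (σ(z)·(Im h(z))²) and L(z) = |h_z̄(z)|² / (σ(z)·(Im h(z))²). Then at every point z₀ ∈ U with h_z̄(z₀) ≠ 0, the Euclidean Laplacian of log L satisfies Δ(log L)(z₀) = 2σ(z₀)·(L(z₀) − H(z₀) − 1). -/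

import Mathlib

/-- The Wirtinger derivative `h_z = (1/2)(D_x h − i·D_y h)`. -/
noncomputable def wdz (h : ℂ → ℂ) (z : ℂ) : ℂ :=
  (1 / 2) * (fderiv ℝ h z 1 - Complex.I * fderiv ℝ h z Complex.I)

/-- The Wirtinger derivative `h_z̄ = (1/2)(D_x h + i·D_y h)`. -/
noncomputable def wdzbar (h : ℂ → ℂ) (z : ℂ) : ℂ :=
  (1 / 2) * (fderiv ℝ h z 1 + Complex.I * fderiv ℝ h z Complex.I)

/-- The Euclidean Laplacian `Δf = ∂²f/∂x² + ∂²f/∂y²` on `ℂ ≅ ℝ²`. -/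
noncomputable def lap (f : ℂ → ℝ) (z : ℂ) : ℝ :=
  fderiv ℝ (fun w => fderiv ℝ f w 1) z 1
    + fderiv ℝ (fun w => fderiv ℝ f w Complex.I) z Complex.I

open Complex Filter Topology

section API
variable {f g : ℂ → ℂ} {z : ℂ}

lemma wdzbar_congr (h : f =ᶠ[nhds z] g) : wdzbar f z = wdzbar g z := by
  unfold wdzbar; rw [h.fderiv_eq]

lemma wdzbar_mul (hf : DifferentiableAt ℝ f z) (hg : DifferentiableAt ℝ g z) :
    wdzbar (fun w => f w * g w) z = wdzbar f z * g z + f z * wdzbar g z := by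
  unfold wdzbar
  rw [fderiv_fun_mul hf hg]
  simp only [ContinuousLinearMap.add_apply, ContinuousLinearMap.smul_apply, smul_eq_mul]
  ring

lemma wdz_mul (hf : DifferentiableAt ℝ f z) (hg : DifferentiableAt ℝ g z) :
    wdz (fun w => f w * g w) z = wdz f z * g z + f z * wdz g z := by
  unfold wdz
  rw [fderiv_fun_mul hf hg]
  simp only [ContinuousLinearMap.add_apply, ContinuousLinearMap.smul_apply, smul_eq_mul]
  ring

lemma wdzbar_add (hf : DifferentiableAt ℝ f z) (hg : DifferentiableAt ℝ g z) :
    wdzbar (fun w => f w + g w) z = wdzbar f z + wdzbar g z := by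
  unfold wdzbar
  rw [fderiv_fun_add hf hg]
  simp only [ContinuousLinearMap.add_apply]
  ring

lemma wdzbar_const_mul (c : ℂ) (hf : DifferentiableAt ℝ f z) :
    wdzbar (fun w => c * f w) z = c * wdzbar f z := by
  unfold wdzbar
  rw [fderiv_const_mul hf c]
  simp only [ContinuousLinearMap.smul_apply, smul_eq_mul]
  ring

lemma wdz_const_mul (c : ℂ) (hf : DifferentiableAt ℝ f z) :
    wdz (fun w => c * f w) z = c * wdz f z := by
  unfold wdz
  rw [fderiv_const_mul hf c]
  simp only [ContinuousLinearMap.smul_apply, smul_eq_mul]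
  ring

lemma wdzbar_conj (hf : DifferentiableAt ℝ f z) :
    wdzbar (fun w => (starRingEnd ℂ) (f w)) z = (starRingEnd ℂ) (wdz f z) := by
  have hd : fderiv ℝ (fun w => (starRingEnd ℂ) (f w)) z
      = (Complex.conjCLE.toContinuousLinearMap).comp (fderiv ℝ f z) :=
    (Complex.conjCLE.toContinuousLinearMap.hasFDerivAt.comp z hf.hasFDerivAt).fderiv
  unfold wdzbar wdz
  rw [hd]
  simp only [ContinuousLinearMap.coe_comp', Function.comp_apply,
    ContinuousLinearEquiv.coe_coe, Complex.conjCLE_apply, map_mul, map_sub, map_one,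
    map_ofNat, Complex.conj_I, map_div₀]
  ring

lemma wdz_conj (hf : DifferentiableAt ℝ f z) :
    wdz (fun w => (starRingEnd ℂ) (f w)) z = (starRingEnd ℂ) (wdzbar f z) := by
  have hd : fderiv ℝ (fun w => (starRingEnd ℂ) (f w)) z
      = (Complex.conjCLE.toContinuousLinearMap).comp (fderiv ℝ f z) :=
    (Complex.conjCLE.toContinuousLinearMap.hasFDerivAt.comp z hf.hasFDerivAt).fderiv
  unfold wdzbar wdz
  rw [hd]
  simp only [ContinuousLinearMap.coe_comp', Function.comp_apply,
    ContinuousLinearEquiv.coe_coe, Complex.conjCLE_apply, map_mul, map_add, map_sub, map_one,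
    map_ofNat, Complex.conj_I, map_div₀]
  ring

lemma wdzbar_inv (hf : DifferentiableAt ℝ f z) (h0 : f z ≠ 0) :
    wdzbar (fun w => (f w)⁻¹) z = -wdzbar f z / (f z) ^ 2 := by
  have hd : HasFDerivAt (fun w => (f w)⁻¹)
      (((ContinuousLinearMap.smulRight (1 : ℂ →L[ℂ] ℂ) (-(f z ^ 2)⁻¹)).restrictScalars ℝ).comp
        (fderiv ℝ f z)) z :=
    ((hasFDerivAt_inv h0).restrictScalars ℝ).comp z hf.hasFDerivAt
  unfold wdzbar
  rw [hd.fderiv]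
  simp only [ContinuousLinearMap.coe_comp', Function.comp_apply,
    ContinuousLinearMap.coe_restrictScalars', ContinuousLinearMap.smulRight_apply,
    ContinuousLinearMap.one_apply, smul_eq_mul]
  field_simp
  ring

end API


section API2
variable {z : ℂ}

lemma fderiv_fderiv_apply {F : Type*} [NormedAddCommGroup F] [NormedSpace ℝ F] {f : ℂ → F} (hd : DifferentiableAt ℝ (fderiv ℝ f) z) (u u' : ℂ) :
    fderiv ℝ (fun w => fderiv ℝ f w u) z u' = fderiv ℝ (fderiv ℝ f) z u' u := by
  have h1 : HasFDerivAt (fun w => fderiv ℝ f w u)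
      ((ContinuousLinearMap.apply ℝ F u).comp (fderiv ℝ (fderiv ℝ f) z)) z :=
    (ContinuousLinearMap.apply ℝ F u).hasFDerivAt.comp z hd.hasFDerivAt
  rw [h1.fderiv]
  rfl

lemma diffAt_fderiv_apply {F : Type*} [NormedAddCommGroup F] [NormedSpace ℝ F] {f : ℂ → F} (hd : DifferentiableAt ℝ (fderiv ℝ f) z) (u : ℂ) :
    DifferentiableAt ℝ (fun w => fderiv ℝ f w u) z :=
  (ContinuousLinearMap.apply ℝ F u).differentiableAt.comp z hd

variable {f : ℂ → ℂ}

lemma wdzbar_wdz_eq (hf : ContDiffAt ℝ 2 f z) :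
    wdzbar (fun w => wdz f w) z
      = (1/4) * ((fderiv ℝ (fun w => fderiv ℝ f w 1) z 1
            + fderiv ℝ (fun w => fderiv ℝ f w Complex.I) z Complex.I)
          + Complex.I * (fderiv ℝ (fun w => fderiv ℝ f w 1) z Complex.I
            - fderiv ℝ (fun w => fderiv ℝ f w Complex.I) z 1)) := by
  have hd : DifferentiableAt ℝ (fderiv ℝ f) z :=
    (hf.fderiv_right (m := 1) (by norm_num)).differentiableAt one_ne_zero
  have hx := diffAt_fderiv_apply hd 1
  have hy := diffAt_fderiv_apply hd Complex.I
  have key : ∀ u : ℂ, fderiv ℝ (fun w => wdz f w) z u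
      = (1/2) * (fderiv ℝ (fun w => fderiv ℝ f w 1) z u
          - Complex.I * fderiv ℝ (fun w => fderiv ℝ f w Complex.I) z u) := by
    intro u
    have : (fun w => wdz f w) = fun w =>
        (1/2 : ℂ) * ((fun w => fderiv ℝ f w 1) w - Complex.I * (fun w => fderiv ℝ f w Complex.I) w) := rfl
    rw [this, fderiv_const_mul (hx.fun_sub ((hy.const_mul Complex.I))),
      fderiv_fun_sub hx (hy.const_mul Complex.I), fderiv_const_mul hy Complex.I]
    simp only [ContinuousLinearMap.smul_apply, ContinuousLinearMap.sub_apply, smul_eq_mul]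
  unfold wdzbar
  rw [key, key]
  ring_nf
  rw [Complex.I_sq]
  ring

lemma wdz_wdzbar_eq (hf : ContDiffAt ℝ 2 f z) :
    wdz (fun w => wdzbar f w) z
      = (1/4) * ((fderiv ℝ (fun w => fderiv ℝ f w 1) z 1
            + fderiv ℝ (fun w => fderiv ℝ f w Complex.I) z Complex.I)
          - Complex.I * (fderiv ℝ (fun w => fderiv ℝ f w 1) z Complex.I
            - fderiv ℝ (fun w => fderiv ℝ f w Complex.I) z 1)) := by
  have hd : DifferentiableAt ℝ (fderiv ℝ f) z :=
    (hf.fderiv_right (m := 1) (by norm_num)).differentiableAt one_ne_zero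
  have hx := diffAt_fderiv_apply hd 1
  have hy := diffAt_fderiv_apply hd Complex.I
  have key : ∀ u : ℂ, fderiv ℝ (fun w => wdzbar f w) z u
      = (1/2) * (fderiv ℝ (fun w => fderiv ℝ f w 1) z u
          + Complex.I * fderiv ℝ (fun w => fderiv ℝ f w Complex.I) z u) := by
    intro u
    have : (fun w => wdzbar f w) = fun w =>
        (1/2 : ℂ) * ((fun w => fderiv ℝ f w 1) w + Complex.I * (fun w => fderiv ℝ f w Complex.I) w) := rfl
    rw [this, fderiv_const_mul (hx.fun_add ((hy.const_mul Complex.I))),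
      fderiv_fun_add hx (hy.const_mul Complex.I), fderiv_const_mul hy Complex.I]
    simp only [ContinuousLinearMap.smul_apply, ContinuousLinearMap.add_apply, smul_eq_mul]
  unfold wdz
  rw [key, key]
  ring_nf
  rw [Complex.I_sq]
  ring

lemma mixed_symm (hf : ContDiffAt ℝ 2 f z) :
    fderiv ℝ (fun w => fderiv ℝ f w 1) z Complex.I
      = fderiv ℝ (fun w => fderiv ℝ f w Complex.I) z 1 := by
  have hd : DifferentiableAt ℝ (fderiv ℝ f) z :=
    (hf.fderiv_right (m := 1) (by norm_num)).differentiableAt one_ne_zero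
  rw [fderiv_fderiv_apply hd, fderiv_fderiv_apply hd]
  exact (hf.isSymmSndFDerivAt (by norm_num)) Complex.I 1

lemma wdz_wdzbar_comm (hf : ContDiffAt ℝ 2 f z) :
    wdz (fun w => wdzbar f w) z = wdzbar (fun w => wdz f w) z := by
  rw [wdz_wdzbar_eq hf, wdzbar_wdz_eq hf, mixed_symm hf]
  ring

end API2


section API3
variable {f : ℂ → ℂ} {n : ℂ → ℝ} {z : ℂ}

lemma fderiv_ofReal (hu : DifferentiableAt ℝ n z) (w : ℂ) :
    fderiv ℝ (fun x => ((n x : ℝ) : ℂ)) z w = ((fderiv ℝ n z w : ℝ) : ℂ) := by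
  have h1 : HasFDerivAt (fun x => ((n x : ℝ) : ℂ))
      (Complex.ofRealCLM.comp (fderiv ℝ n z)) z :=
    Complex.ofRealCLM.hasFDerivAt.comp z hu.hasFDerivAt
  rw [h1.fderiv]
  rfl

lemma lap_eq_re
    (h1 : ∀ᶠ w in nhds z, DifferentiableAt ℝ n w)
    (h2 : DifferentiableAt ℝ (fun w => fderiv ℝ n w 1) z)
    (h3 : DifferentiableAt ℝ (fun w => fderiv ℝ n w Complex.I) z) :
    lap n z = (4 * wdzbar (fun w => wdz (fun x => ((n x : ℝ) : ℂ)) w) z).re := by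
  set P : ℂ → ℝ := fun w => fderiv ℝ n w 1 with hP
  set Q : ℂ → ℝ := fun w => fderiv ℝ n w Complex.I with hQ
  have hPc : DifferentiableAt ℝ (fun w => ((P w : ℝ) : ℂ)) z :=
    Complex.ofRealCLM.differentiableAt.comp z h2
  have hQc : DifferentiableAt ℝ (fun w => ((Q w : ℝ) : ℂ)) z :=
    Complex.ofRealCLM.differentiableAt.comp z h3
  have hev : (fun w => wdz (fun x => ((n x : ℝ) : ℂ)) w)
      =ᶠ[nhds z] fun w => (1/2 : ℂ) * (((P w : ℝ) : ℂ) - Complex.I * ((Q w : ℝ) : ℂ)) := by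
    filter_upwards [h1] with w hw
    unfold wdz
    rw [fderiv_ofReal hw, fderiv_ofReal hw]
  rw [wdzbar_congr hev]
  have key : ∀ u : ℂ, fderiv ℝ
      (fun w => (1/2 : ℂ) * (((P w : ℝ) : ℂ) - Complex.I * ((Q w : ℝ) : ℂ))) z u
      = (1/2 : ℂ) * (((fderiv ℝ P z u : ℝ) : ℂ) - Complex.I * ((fderiv ℝ Q z u : ℝ) : ℂ)) := by
    intro u
    rw [fderiv_const_mul (hPc.fun_sub (hQc.const_mul Complex.I)),
      fderiv_fun_sub hPc (hQc.const_mul Complex.I), fderiv_const_mul hQc Complex.I]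
    simp only [ContinuousLinearMap.smul_apply, ContinuousLinearMap.sub_apply, smul_eq_mul]
    rw [fderiv_ofReal h2, fderiv_ofReal h3]
  unfold wdzbar lap
  rw [key, key]
  simp [Complex.ext_iff]
  ring
end API3

section API4
variable {f : ℂ → ℂ} {n : ℂ → ℝ} {z : ℂ}

lemma diffAt_wdz (hf : ContDiffAt ℝ 2 f z) : DifferentiableAt ℝ (fun w => wdz f w) z := by
  have hd : DifferentiableAt ℝ (fderiv ℝ f) z :=
    (hf.fderiv_right (m := 1) (by norm_num)).differentiableAt one_ne_zero
  have : (fun w => wdz f w) = fun w => (1/2 : ℂ) *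
      ((fun w => fderiv ℝ f w 1) w - Complex.I * (fun w => fderiv ℝ f w Complex.I) w) := rfl
  rw [this]
  exact ((diffAt_fderiv_apply hd 1).sub
    ((diffAt_fderiv_apply hd Complex.I).const_mul Complex.I)).const_mul _

lemma diffAt_wdzbar (hf : ContDiffAt ℝ 2 f z) : DifferentiableAt ℝ (fun w => wdzbar f w) z := by
  have hd : DifferentiableAt ℝ (fderiv ℝ f) z :=
    (hf.fderiv_right (m := 1) (by norm_num)).differentiableAt one_ne_zero
  have : (fun w => wdzbar f w) = fun w => (1/2 : ℂ) *
      ((fun w => fderiv ℝ f w 1) w + Complex.I * (fun w => fderiv ℝ f w Complex.I) w) := rfl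
  rw [this]
  exact ((diffAt_fderiv_apply hd 1).add
    ((diffAt_fderiv_apply hd Complex.I).const_mul Complex.I)).const_mul _

lemma lap_log (hn : ∀ᶠ w in nhds z, ContDiffAt ℝ 3 n w) (hpos : ∀ᶠ w in nhds z, 0 < n w) :
    lap (fun w => Real.log (n w)) z
      = (4 * (wdzbar (fun w => wdz (fun x => ((n x : ℝ) : ℂ)) w) z * (((n z : ℝ) : ℂ))⁻¹
          - wdz (fun x => ((n x : ℝ) : ℂ)) z * wdzbar (fun x => ((n x : ℝ) : ℂ)) z
            * ((((n z : ℝ) : ℂ)) ^ 2)⁻¹)).re := by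
  set N : ℂ → ℂ := fun x => ((n x : ℝ) : ℂ) with hNdef
  have hnz : ContDiffAt ℝ 3 n z := hn.self_of_nhds
  have hposz : 0 < n z := hpos.self_of_nhds
  have hNsm : ContDiffAt ℝ 3 N z :=
    Complex.ofRealCLM.contDiff.comp_contDiffAt z hnz
  have hdn : DifferentiableAt ℝ n z := hnz.differentiableAt (by norm_num)
  have hN0 : N z ≠ 0 := by
    simp only [hNdef, ne_eq, Complex.ofReal_eq_zero]
    exact hposz.ne'
  -- step 1: lap_eq_re for log ∘ n
  have h1 : ∀ᶠ w in nhds z, DifferentiableAt ℝ (fun x => Real.log (n x)) w := by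
    filter_upwards [hn, hpos] with w hw1 hw2
    exact (hw1.differentiableAt (by norm_num)).log hw2.ne'
  have hDlog : ∀ u : ℂ, (fun w => fderiv ℝ (fun x => Real.log (n x)) w u)
      =ᶠ[nhds z] fun w => (n w)⁻¹ * fderiv ℝ n w u := by
    intro u
    filter_upwards [hn, hpos] with w hw1 hw2
    rw [((hw1.differentiableAt (by norm_num)).hasFDerivAt.log hw2.ne').fderiv]
    simp [smul_eq_mul]
  have hfdn : DifferentiableAt ℝ (fderiv ℝ n) z :=
    (hnz.fderiv_right (m := 2) (by norm_num)).differentiableAt (by norm_num)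
  have hDlogdiff : ∀ u : ℂ, DifferentiableAt ℝ
      (fun w => fderiv ℝ (fun x => Real.log (n x)) w u) z := by
    intro u
    refine (Filter.EventuallyEq.differentiableAt_iff (hDlog u)).2 ?_
    exact (hdn.inv hposz.ne').mul (diffAt_fderiv_apply hfdn u)
  rw [lap_eq_re h1 (hDlogdiff 1) (hDlogdiff Complex.I)]
  -- step 2: wdz of coerced log equals N⁻¹ * wdz N near z
  have hev : (fun w => wdz (fun x => ((Real.log (n x) : ℝ) : ℂ)) w)
      =ᶠ[nhds z] fun w => (N w)⁻¹ * wdz N w := by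
    filter_upwards [hn, hpos] with w hw1 hw2
    have hdw : DifferentiableAt ℝ n w := hw1.differentiableAt (by norm_num)
    have hdlw : DifferentiableAt ℝ (fun x => Real.log (n x)) w := hdw.log hw2.ne'
    have hflog : ∀ u : ℂ, fderiv ℝ (fun x => Real.log (n x)) w u
        = (n w)⁻¹ * fderiv ℝ n w u := by
      intro u
      rw [(hdw.hasFDerivAt.log hw2.ne').fderiv]
      simp [smul_eq_mul]
    unfold wdz
    rw [fderiv_ofReal hdlw, fderiv_ofReal hdlw, fderiv_ofReal hdw, fderiv_ofReal hdw,
      hflog, hflog]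
    push_cast
    ring
  rw [wdzbar_congr hev]
  -- step 3: product and inverse rules
  have hNdiff : DifferentiableAt ℝ N z := hNsm.differentiableAt (by norm_num)
  have hNinv : DifferentiableAt ℝ (fun w => (N w)⁻¹) z := hNdiff.inv hN0
  have hwdzN : DifferentiableAt ℝ (fun w => wdz N w) z :=
    diffAt_wdz (hNsm.of_le (by norm_num))
  rw [wdzbar_mul hNinv hwdzN, wdzbar_inv hNdiff hN0]
  congr 1
  have hnc : ((n z : ℝ) : ℂ) = N z := rfl
  rw [hnc]
  field_simp
  ring

end API4

section API5
variable {f g : ℂ → ℂ} {z : ℂ}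

lemma wdzbar_sub (hf : DifferentiableAt ℝ f z) (hg : DifferentiableAt ℝ g z) :
    wdzbar (fun w => f w - g w) z = wdzbar f z - wdzbar g z := by
  unfold wdzbar
  rw [fderiv_fun_sub hf hg]
  simp only [ContinuousLinearMap.sub_apply]
  ring

lemma wdz_sub (hf : DifferentiableAt ℝ f z) (hg : DifferentiableAt ℝ g z) :
    wdz (fun w => f w - g w) z = wdz f z - wdz g z := by
  unfold wdz
  rw [fderiv_fun_sub hf hg]
  simp only [ContinuousLinearMap.sub_apply]
  ring

lemma diffAt_conj (hf : DifferentiableAt ℝ f z) :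
    DifferentiableAt ℝ (fun w => (starRingEnd ℂ) (f w)) z :=
  Complex.conjCLE.toContinuousLinearMap.differentiableAt.comp z hf

lemma contDiffAt_wdz_top (hf : ContDiffAt ℝ (⊤ : ℕ∞) f z) :
    ContDiffAt ℝ (⊤ : ℕ∞) (fun w => wdz f w) z := by
  have hd : ContDiffAt ℝ (⊤ : ℕ∞) (fderiv ℝ f) z := hf.fderiv_right (by simp)
  have hx : ContDiffAt ℝ (⊤ : ℕ∞) (fun w => fderiv ℝ f w 1) z :=
    (ContinuousLinearMap.apply ℝ ℂ (1 : ℂ)).contDiff.comp_contDiffAt z hd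
  have hy : ContDiffAt ℝ (⊤ : ℕ∞) (fun w => fderiv ℝ f w Complex.I) z :=
    (ContinuousLinearMap.apply ℝ ℂ (Complex.I : ℂ)).contDiff.comp_contDiffAt z hd
  exact contDiffAt_const.mul (hx.sub (contDiffAt_const.mul hy))

lemma contDiffAt_wdzbar_top (hf : ContDiffAt ℝ (⊤ : ℕ∞) f z) :
    ContDiffAt ℝ (⊤ : ℕ∞) (fun w => wdzbar f w) z := by
  have hd : ContDiffAt ℝ (⊤ : ℕ∞) (fderiv ℝ f) z := hf.fderiv_right (by simp)
  have hx : ContDiffAt ℝ (⊤ : ℕ∞) (fun w => fderiv ℝ f w 1) z :=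
    (ContinuousLinearMap.apply ℝ ℂ (1 : ℂ)).contDiff.comp_contDiffAt z hd
  have hy : ContDiffAt ℝ (⊤ : ℕ∞) (fun w => fderiv ℝ f w Complex.I) z :=
    (ContinuousLinearMap.apply ℝ ℂ (Complex.I : ℂ)).contDiff.comp_contDiffAt z hd
  exact contDiffAt_const.mul (hx.add (contDiffAt_const.mul hy))

lemma contDiff_normSq : ContDiff ℝ (⊤ : ℕ∞) (fun z : ℂ => Complex.normSq z) := by
  have : (fun z : ℂ => Complex.normSq z) = fun z : ℂ => z.re * z.re + z.im * z.im := by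
    funext z; exact Complex.normSq_apply z
  rw [this]
  exact (Complex.reCLM.contDiff.mul Complex.reCLM.contDiff).add
    (Complex.imCLM.contDiff.mul Complex.imCLM.contDiff)

end API5

section API6
variable {f g k : ℂ → ℝ} {z : ℂ}

lemma lap_congr (h : f =ᶠ[nhds z] g) : lap f z = lap g z := by
  have h1 : ∀ u : ℂ, (fun w => fderiv ℝ f w u) =ᶠ[nhds z] (fun w => fderiv ℝ g w u) := by
    intro u
    filter_upwards [h.fderiv (𝕜 := ℝ)] with w hw
    rw [hw]
  unfold lap
  rw [(h1 1).fderiv_eq, (h1 Complex.I).fderiv_eq]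

lemma lap_lincomb3 (c₁ c₂ c₃ : ℝ)
    (hf : ∀ᶠ w in nhds z, ContDiffAt ℝ 3 f w)
    (hg : ∀ᶠ w in nhds z, ContDiffAt ℝ 3 g w)
    (hk : ∀ᶠ w in nhds z, ContDiffAt ℝ 3 k w) :
    lap (fun w => c₁ * f w + c₂ * g w + c₃ * k w) z
      = c₁ * lap f z + c₂ * lap g z + c₃ * lap k z := by
  have hdf : ∀ᶠ w in nhds z, DifferentiableAt ℝ f w ∧ DifferentiableAt ℝ g w
      ∧ DifferentiableAt ℝ k w := by
    filter_upwards [hf, hg, hk] with w h1 h2 h3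
    exact ⟨h1.differentiableAt (by norm_num), h2.differentiableAt (by norm_num),
      h3.differentiableAt (by norm_num)⟩
  have hev : ∀ u : ℂ, (fun w => fderiv ℝ (fun x => c₁ * f x + c₂ * g x + c₃ * k x) w u)
      =ᶠ[nhds z] fun w => c₁ * fderiv ℝ f w u + c₂ * fderiv ℝ g w u + c₃ * fderiv ℝ k w u := by
    intro u
    filter_upwards [hdf] with w ⟨h1, h2, h3⟩
    rw [fderiv_fun_add ((h1.const_mul c₁).fun_add (h2.const_mul c₂)) (h3.const_mul c₃),
      fderiv_fun_add (h1.const_mul c₁) (h2.const_mul c₂),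
      fderiv_const_mul h1 c₁, fderiv_const_mul h2 c₂, fderiv_const_mul h3 c₃]
    simp [smul_eq_mul]
  have hD : ∀ (n : ℂ → ℝ), ContDiffAt ℝ 3 n z → ∀ u : ℂ,
      DifferentiableAt ℝ (fun w => fderiv ℝ n w u) z := by
    intro n hn u
    exact diffAt_fderiv_apply
      ((hn.fderiv_right (m := 2) (by norm_num)).differentiableAt (by norm_num)) u
  have hfz := hf.self_of_nhds; have hgz := hg.self_of_nhds; have hkz := hk.self_of_nhds
  unfold lap
  rw [(hev 1).fderiv_eq, (hev Complex.I).fderiv_eq]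
  rw [fderiv_fun_add (((hD f hfz 1).const_mul c₁).fun_add ((hD g hgz 1).const_mul c₂))
      ((hD k hkz 1).const_mul c₃),
    fderiv_fun_add ((hD f hfz 1).const_mul c₁) ((hD g hgz 1).const_mul c₂),
    fderiv_const_mul (hD f hfz 1) c₁, fderiv_const_mul (hD g hgz 1) c₂,
    fderiv_const_mul (hD k hkz 1) c₃,
    fderiv_fun_add (((hD f hfz Complex.I).const_mul c₁).fun_add ((hD g hgz Complex.I).const_mul c₂))
      ((hD k hkz Complex.I).const_mul c₃),
    fderiv_fun_add ((hD f hfz Complex.I).const_mul c₁) ((hD g hgz Complex.I).const_mul c₂),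
    fderiv_const_mul (hD f hfz Complex.I) c₁, fderiv_const_mul (hD g hgz Complex.I) c₂,
    fderiv_const_mul (hD k hkz Complex.I) c₃]
  simp [smul_eq_mul]
  ring

end API6

section ALG

lemma ofReal_re_eq (z : ℂ) : ((z.re : ℝ) : ℂ) = (z + (starRingEnd ℂ) z) / 2 := by
  rw [Complex.add_conj]
  push_cast
  ring

lemma alg_V (A B : ℂ) {t : ℝ} (ht : t ≠ 0) (E : ℂ)
    (hE : E = -(Complex.I / (t : ℂ) * A * B)) :
    4 * ((2 * Complex.I)⁻¹ * (E - (starRingEnd ℂ) E) * ((t : ℂ))⁻¹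
        - ((2 * Complex.I)⁻¹ * (A - (starRingEnd ℂ) B))
          * ((2 * Complex.I)⁻¹ * (B - (starRingEnd ℂ) A)) * (((t : ℂ)) ^ 2)⁻¹)
      = ((-(Complex.normSq A + Complex.normSq B + 2 * (A * B).re) / t ^ 2 : ℝ) : ℂ) := by
  have htc : (t : ℂ) ≠ 0 := Complex.ofReal_ne_zero.2 ht
  have h2 : Complex.I ^ 2 = -1 := Complex.I_sq
  have h3 : Complex.I ^ 3 = -Complex.I := by rw [pow_succ, h2]; ring
  have h4 : Complex.I ^ 4 = 1 := by rw [pow_succ, h3]; simp [Complex.I_mul_I]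
  have h5 : Complex.I ^ 5 = Complex.I := by rw [pow_succ, h4]; ring
  have h6 : Complex.I ^ 6 = -1 := by rw [pow_succ, h5]; simp [Complex.I_mul_I]
  subst hE
  push_cast
  rw [ofReal_re_eq, ← Complex.mul_conj, ← Complex.mul_conj]
  simp only [map_mul, map_sub, map_add, map_neg, map_div₀, map_inv₀, map_ofNat, map_pow, Complex.conj_I,
    Complex.conj_conj, Complex.conj_ofReal]
  ring_nf
  simp only [Complex.inv_I, h2, h3, h4, h5, h6]
  ring_nf
  simp only [Complex.inv_I, h2, h3, h4, h5, h6]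
  ring

set_option maxHeartbeats 1600000 in
lemma alg_N (A B C : ℂ) {t : ℝ} (ht : t ≠ 0) (hB : B ≠ 0) (E G : ℂ)
    (hE : E = -(Complex.I / (t : ℂ) * A * B))
    (hG : G = -Complex.I * (-((2 * Complex.I)⁻¹ * (B - (starRingEnd ℂ) A)) / (t : ℂ) ^ 2 * (A * B)
        + ((t : ℂ))⁻¹ * (E * B + A * C))) :
    4 * ((G * (starRingEnd ℂ) B + E * (starRingEnd ℂ) E
          + (C * (starRingEnd ℂ) C + B * (starRingEnd ℂ) G))
            * ((Complex.normSq B : ℝ) : ℂ)⁻¹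
        - (E * (starRingEnd ℂ) B + B * (starRingEnd ℂ) C)
          * (C * (starRingEnd ℂ) B + B * (starRingEnd ℂ) E)
            * ((((Complex.normSq B : ℝ) : ℂ)) ^ 2)⁻¹)
      = ((-(4 * ((A * B).re + Complex.normSq A)) / t ^ 2 : ℝ) : ℂ) := by
  have htc : (t : ℂ) ≠ 0 := Complex.ofReal_ne_zero.2 ht
  have hBc : (starRingEnd ℂ) B ≠ 0 := star_ne_zero.2 hB
  have h2 : Complex.I ^ 2 = -1 := Complex.I_sq
  have h3 : Complex.I ^ 3 = -Complex.I := by rw [pow_succ, h2]; ring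
  have h4 : Complex.I ^ 4 = 1 := by rw [pow_succ, h3]; simp [Complex.I_mul_I]
  have hGc : G = -(A * B^2) / (2 * (t:ℂ)^2) - A * (starRingEnd ℂ) A * B / (2 * (t:ℂ)^2)
      - Complex.I * A * C / (t : ℂ) := by
    rw [hG, hE]
    simp only [mul_inv, Complex.inv_I]
    ring_nf
    simp only [Complex.inv_I, h2, h3, h4]
    ring
  have hEc : (starRingEnd ℂ) E = Complex.I / (t : ℂ) * (starRingEnd ℂ) A * (starRingEnd ℂ) B := by
    rw [hE]
    simp only [map_mul, map_neg, map_div₀, Complex.conj_I, Complex.conj_ofReal]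
    ring
  have hGcc : (starRingEnd ℂ) G = -((starRingEnd ℂ) A * (starRingEnd ℂ) B^2) / (2 * (t:ℂ)^2)
      - (starRingEnd ℂ) A * A * (starRingEnd ℂ) B / (2 * (t:ℂ)^2)
      + Complex.I * (starRingEnd ℂ) A * (starRingEnd ℂ) C / (t : ℂ) := by
    rw [hGc]
    simp only [map_mul, map_neg, map_div₀, map_add, map_sub, map_pow, map_ofNat,
      Complex.conj_I, Complex.conj_conj, Complex.conj_ofReal]
    ring
  rw [hGcc, hEc, hGc, hE]
  push_cast
  rw [ofReal_re_eq, ← Complex.mul_conj, ← Complex.mul_conj]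
  simp only [map_mul, map_sub, map_add, map_neg, map_div₀, map_inv₀, map_ofNat, map_pow,
    Complex.conj_I, Complex.conj_conj, Complex.conj_ofReal]
  simp only [← div_eq_mul_inv]
  have hBB : B * (starRingEnd ℂ) B ≠ 0 := mul_ne_zero hB hBc
  rw [div_sub_div _ _ hBB (pow_ne_zero 2 hBB), mul_comm (4:ℂ), div_mul_eq_mul_div,
    div_eq_iff (mul_ne_zero hBB (pow_ne_zero 2 hBB))]
  ring_nf

end ALG

/-- Bochner formula (VI) of Proposition 2.3: for a harmonic map `h` into the hyperbolic
upper half-plane over a domain with curvature `−1` metric `σ|dz|²` (i.e. `Δ log σ = 2σ`),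
at every point where `h_z̄ ≠ 0` the anti-holomorphic energy `L = |h_z̄|²/(σ·(Im h)²)` satisfies
`Δ(log L) = 2σ·(L − H − 1)`, where `H = |h_z|²/(σ·(Im h)²)`. -/
theorem stmt_7 (U : Set ℂ) (hU : IsOpen U) (σ : ℂ → ℝ) (h : ℂ → ℂ)
    (hσ : ContDiffOn ℝ (⊤ : ℕ∞) σ U) (hσpos : ∀ z ∈ U, 0 < σ z)
    (hcurv : ∀ z ∈ U, lap (fun w => Real.log (σ w)) z = 2 * σ z)
    (hsm : ContDiffOn ℝ (⊤ : ℕ∞) h U)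
    (him : ∀ z ∈ U, 0 < (h z).im)
    (hharm : ∀ z ∈ U,
      wdzbar (fun w => wdz h w) z
        + (Complex.I / ((h z).im : ℂ)) * wdz h z * wdzbar h z = 0)
    (H L : ℂ → ℝ)
    (hH : ∀ z, H z = ‖wdz h z‖ ^ 2 / (σ z * ((h z).im) ^ 2))
    (hL : ∀ z, L z = ‖wdzbar h z‖ ^ 2 / (σ z * ((h z).im) ^ 2))
    (z₀ : ℂ) (hz₀ : z₀ ∈ U) (hnz : wdzbar h z₀ ≠ 0) :
    lap (fun w => Real.log (L w)) z₀ = 2 * σ z₀ * (L z₀ - H z₀ - 1) := by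
  have hUnhd : U ∈ nhds z₀ := hU.mem_nhds hz₀
  have hevU : ∀ᶠ w in nhds z₀, w ∈ U := hUnhd
  -- abbreviations (as plain functions, no `set` to avoid surprises)
  let a : ℂ → ℂ := fun w => wdz h w
  let b : ℂ → ℂ := fun w => wdzbar h w
  let v : ℂ → ℝ := fun w => (h w).im
  -- smoothness
  have hhAt : ∀ w ∈ U, ContDiffAt ℝ (⊤ : ℕ∞) h w := fun w hw => (hsm w hw).contDiffAt (hU.mem_nhds hw)
  have hσAt : ∀ w ∈ U, ContDiffAt ℝ (⊤ : ℕ∞) σ w := fun w hw => (hσ w hw).contDiffAt (hU.mem_nhds hw)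
  have haAt : ∀ w ∈ U, ContDiffAt ℝ (⊤ : ℕ∞) (fun x => wdz h x) w :=
    fun w hw => contDiffAt_wdz_top (hhAt w hw)
  have hbAt : ∀ w ∈ U, ContDiffAt ℝ (⊤ : ℕ∞) (fun x => wdzbar h x) w :=
    fun w hw => contDiffAt_wdzbar_top (hhAt w hw)
  have hvAt : ∀ w ∈ U, ContDiffAt ℝ (⊤ : ℕ∞) (fun x => (h x).im) w :=
    fun w hw => Complex.imCLM.contDiff.comp_contDiffAt w (hhAt w hw)
  have hnAt : ∀ w ∈ U, ContDiffAt ℝ (⊤ : ℕ∞) (fun x => Complex.normSq (wdzbar h x)) w :=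
    fun w hw => contDiff_normSq.comp_contDiffAt w (hbAt w hw)
  -- eventual nonvanishing of b
  have hbcont : ContinuousAt (fun x => wdzbar h x) z₀ :=
    ((hbAt z₀ hz₀).differentiableAt (by simp)).continuousAt
  have hbne : ∀ᶠ w in nhds z₀, wdzbar h w ≠ 0 := hbcont.eventually_ne hnz
  -- point values
  have ht : 0 < (h z₀).im := him z₀ hz₀
  have hs : 0 < σ z₀ := hσpos z₀ hz₀
  -- split of log L
  have hsplit : (fun w => Real.log (L w)) =ᶠ[nhds z₀]
      fun w => (1 : ℝ) * Real.log (Complex.normSq (wdzbar h w))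
        + (-1 : ℝ) * Real.log (σ w) + (-2 : ℝ) * Real.log ((h w).im) := by
    filter_upwards [hevU, hbne] with w hw hbw
    rw [hL w, Complex.sq_norm]
    have h1 : Complex.normSq (wdzbar h w) ≠ 0 := (Complex.normSq_pos.2 hbw).ne'
    have h2 : σ w ≠ 0 := (hσpos w hw).ne'
    have h3 : (h w).im ≠ 0 := (him w hw).ne'
    rw [Real.log_div h1 (by positivity), Real.log_mul h2 (by positivity), Real.log_pow]
    push_cast
    ring
  have hn3 : ∀ᶠ w in nhds z₀, ContDiffAt ℝ 3
      (fun x => Real.log (Complex.normSq (wdzbar h x))) w := by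
    filter_upwards [hevU, hbne] with w hw hbw
    exact ((hnAt w hw).of_le (WithTop.coe_le_coe.2 le_top)).log ((Complex.normSq_pos.2 hbw).ne')
  have hσ3 : ∀ᶠ w in nhds z₀, ContDiffAt ℝ 3 (fun x => Real.log (σ x)) w := by
    filter_upwards [hevU] with w hw
    exact ((hσAt w hw).of_le (WithTop.coe_le_coe.2 le_top)).log (hσpos w hw).ne'
  have hv3 : ∀ᶠ w in nhds z₀, ContDiffAt ℝ 3 (fun x => Real.log ((h x).im)) w := by
    filter_upwards [hevU] with w hw
    exact ((hvAt w hw).of_le (WithTop.coe_le_coe.2 le_top)).log (him w hw).ne'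
  rw [lap_congr hsplit, lap_lincomb3 1 (-1) (-2) hn3 hσ3 hv3, hcurv z₀ hz₀]
  -- laplacians of the two logs via lap_log
  have hnn : ∀ᶠ w in nhds z₀, ContDiffAt ℝ 3 (fun x => Complex.normSq (wdzbar h x)) w := by
    filter_upwards [hevU] with w hw; exact (hnAt w hw).of_le (WithTop.coe_le_coe.2 le_top)
  have hnpos : ∀ᶠ w in nhds z₀, 0 < Complex.normSq (wdzbar h w) := by
    filter_upwards [hbne] with w hw; exact Complex.normSq_pos.2 hw
  have hvv : ∀ᶠ w in nhds z₀, ContDiffAt ℝ 3 (fun x => (h x).im) w := by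
    filter_upwards [hevU] with w hw; exact (hvAt w hw).of_le (WithTop.coe_le_coe.2 le_top)
  have hvpos : ∀ᶠ w in nhds z₀, 0 < (h w).im := by
    filter_upwards [hevU] with w hw; exact him w hw
  rw [lap_log hnn hnpos, lap_log hvv hvpos]
  -- differentiability shortcuts
  have hdh : DifferentiableAt ℝ h z₀ := (hhAt z₀ hz₀).differentiableAt (by simp)
  have hdhU : ∀ w ∈ U, DifferentiableAt ℝ h w :=
    fun w hw => (hhAt w hw).differentiableAt (by simp)
  have hdaU : ∀ w ∈ U, DifferentiableAt ℝ (fun x => wdz h x) w :=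
    fun w hw => (haAt w hw).differentiableAt (by simp)
  have hdbU : ∀ w ∈ U, DifferentiableAt ℝ (fun x => wdzbar h x) w :=
    fun w hw => (hbAt w hw).differentiableAt (by simp)
  have hb2 : ContDiffAt ℝ 2 (fun x => wdzbar h x) z₀ := (hbAt z₀ hz₀).of_le (WithTop.coe_le_coe.2 le_top)
  -- harmonic equation and symmetry on U
  have hharm' : ∀ w ∈ U, wdzbar (fun x => wdz h x) w
      = -(Complex.I / ((h w).im : ℂ) * wdz h w * wdzbar h w) :=
    fun w hw => eq_neg_of_add_eq_zero_left (hharm w hw)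
  have hsymm : ∀ w ∈ U, wdz (fun x => wdzbar h x) w = wdzbar (fun x => wdz h x) w :=
    fun w hw => wdz_wdzbar_comm ((hhAt w hw).of_le (WithTop.coe_le_coe.2 le_top))
  have hE0 : wdzbar (fun x => wdz h x) z₀
      = -(Complex.I / ((h z₀).im : ℂ) * wdz h z₀ * wdzbar h z₀) := hharm' z₀ hz₀
  have hP0 : wdz (fun x => wdzbar h x) z₀
      = -(Complex.I / ((h z₀).im : ℂ) * wdz h z₀ * wdzbar h z₀) := (hsymm z₀ hz₀).trans hE0
  -- the coerced imaginary part
  have hVc : (fun x : ℂ => (((h x).im : ℝ) : ℂ))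
      = fun w => (2 * Complex.I)⁻¹ * (h w - (starRingEnd ℂ) (h w)) := by
    funext w
    rw [Complex.sub_conj]
    push_cast
    field_simp
  have hwdzV : ∀ w ∈ U, wdz (fun x => (((h x).im : ℝ) : ℂ)) w
      = (2 * Complex.I)⁻¹ * (wdz h w - (starRingEnd ℂ) (wdzbar h w)) := by
    intro w hw
    rw [hVc, wdz_const_mul _ ((hdhU w hw).fun_sub (diffAt_conj (hdhU w hw))),
      wdz_sub (hdhU w hw) (diffAt_conj (hdhU w hw)), wdz_conj (hdhU w hw)]
  have hwdzbarV : ∀ w ∈ U, wdzbar (fun x => (((h x).im : ℝ) : ℂ)) w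
      = (2 * Complex.I)⁻¹ * (wdzbar h w - (starRingEnd ℂ) (wdz h w)) := by
    intro w hw
    rw [hVc, wdzbar_const_mul _ ((hdhU w hw).fun_sub (diffAt_conj (hdhU w hw))),
      wdzbar_sub (hdhU w hw) (diffAt_conj (hdhU w hw)), wdzbar_conj (hdhU w hw)]
  have hGV : wdzbar (fun w => wdz (fun x => (((h x).im : ℝ) : ℂ)) w) z₀
      = (2 * Complex.I)⁻¹ * (wdzbar (fun x => wdz h x) z₀
          - (starRingEnd ℂ) (wdz (fun x => wdzbar h x) z₀)) := by
    have hev : (fun w => wdz (fun x => (((h x).im : ℝ) : ℂ)) w) =ᶠ[nhds z₀]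
        fun w => (2 * Complex.I)⁻¹ * (wdz h w - (starRingEnd ℂ) (wdzbar h w)) := by
      filter_upwards [hevU] with w hw; exact hwdzV w hw
    rw [wdzbar_congr hev,
      wdzbar_const_mul _ ((hdaU z₀ hz₀).fun_sub (diffAt_conj (hdbU z₀ hz₀))),
      wdzbar_sub (hdaU z₀ hz₀) (diffAt_conj (hdbU z₀ hz₀)),
      wdzbar_conj (hdbU z₀ hz₀)]
  -- second z-zbar derivative of b
  have htC : (((h z₀).im : ℝ) : ℂ) ≠ 0 := Complex.ofReal_ne_zero.2 ht.ne'
  have hdVc : DifferentiableAt ℝ (fun x => (((h x).im : ℝ) : ℂ)) z₀ :=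
    Complex.ofRealCLM.differentiableAt.comp z₀ (Complex.imCLM.differentiableAt.comp z₀ hdh)
  have hbz_ev : (fun w => wdz (fun x => wdzbar h x) w) =ᶠ[nhds z₀]
      fun w => -Complex.I * ((((h w).im : ℂ))⁻¹ * (wdz h w * wdzbar h w)) := by
    filter_upwards [hevU] with w hw
    rw [hsymm w hw, hharm' w hw, div_eq_mul_inv]
    ring
  have hG : wdzbar (fun w => wdz (fun x => wdzbar h x) w) z₀
      = -Complex.I * (-((2 * Complex.I)⁻¹ * (wdzbar h z₀ - (starRingEnd ℂ) (wdz h z₀)))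
            / ((((h z₀).im : ℝ) : ℂ)) ^ 2 * (wdz h z₀ * wdzbar h z₀)
          + ((((h z₀).im : ℝ) : ℂ))⁻¹
            * (-(Complex.I / ((h z₀).im : ℂ) * wdz h z₀ * wdzbar h z₀) * wdzbar h z₀
              + wdz h z₀ * wdzbar (fun x => wdzbar h x) z₀)) := by
    rw [wdzbar_congr hbz_ev,
      wdzbar_const_mul _ ((hdVc.fun_inv htC).fun_mul ((hdaU z₀ hz₀).fun_mul (hdbU z₀ hz₀))),
      wdzbar_mul (hdVc.fun_inv htC) ((hdaU z₀ hz₀).fun_mul (hdbU z₀ hz₀)),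
      wdzbar_inv hdVc htC,
      wdzbar_mul (hdaU z₀ hz₀) (hdbU z₀ hz₀),
      hwdzbarV z₀ hz₀, hE0]
  -- the coerced normSq of b
  have hNc : (fun x : ℂ => ((Complex.normSq (wdzbar h x) : ℝ) : ℂ))
      = fun w => wdzbar h w * (starRingEnd ℂ) (wdzbar h w) := by
    funext w; rw [Complex.mul_conj]
  have hwdzN_ev : (fun w => wdz (fun x => ((Complex.normSq (wdzbar h x) : ℝ) : ℂ)) w)
      =ᶠ[nhds z₀] fun w => wdz (fun x => wdzbar h x) w * (starRingEnd ℂ) (wdzbar h w)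
        + wdzbar h w * (starRingEnd ℂ) (wdzbar (fun x => wdzbar h x) w) := by
    filter_upwards [hevU] with w hw
    rw [hNc, wdz_mul (hdbU w hw) (diffAt_conj (hdbU w hw)), wdz_conj (hdbU w hw)]
  have hwdzN0 : wdz (fun x => ((Complex.normSq (wdzbar h x) : ℝ) : ℂ)) z₀
      = wdz (fun x => wdzbar h x) z₀ * (starRingEnd ℂ) (wdzbar h z₀)
        + wdzbar h z₀ * (starRingEnd ℂ) (wdzbar (fun x => wdzbar h x) z₀) :=
    hwdzN_ev.self_of_nhds
  have hwdzbarN0 : wdzbar (fun x => ((Complex.normSq (wdzbar h x) : ℝ) : ℂ)) z₀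
      = wdzbar (fun x => wdzbar h x) z₀ * (starRingEnd ℂ) (wdzbar h z₀)
        + wdzbar h z₀ * (starRingEnd ℂ) (wdz (fun x => wdzbar h x) z₀) := by
    rw [hNc, wdzbar_mul (hdbU z₀ hz₀) (diffAt_conj (hdbU z₀ hz₀)), wdzbar_conj (hdbU z₀ hz₀)]
  have hGN : wdzbar (fun w => wdz (fun x => ((Complex.normSq (wdzbar h x) : ℝ) : ℂ)) w) z₀
      = wdzbar (fun w => wdz (fun x => wdzbar h x) w) z₀ * (starRingEnd ℂ) (wdzbar h z₀)
          + wdz (fun x => wdzbar h x) z₀ * (starRingEnd ℂ) (wdz (fun x => wdzbar h x) z₀)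
        + (wdzbar (fun x => wdzbar h x) z₀ * (starRingEnd ℂ) (wdzbar (fun x => wdzbar h x) z₀)
          + wdzbar h z₀ * (starRingEnd ℂ) (wdzbar (fun w => wdz (fun x => wdzbar h x) w) z₀)) := by
    rw [wdzbar_congr hwdzN_ev,
      wdzbar_add ((diffAt_wdz hb2).fun_mul (diffAt_conj (hdbU z₀ hz₀)))
        ((hdbU z₀ hz₀).fun_mul (diffAt_conj (diffAt_wdzbar hb2))),
      wdzbar_mul (diffAt_wdz hb2) (diffAt_conj (hdbU z₀ hz₀)),
      wdzbar_conj (hdbU z₀ hz₀),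
      wdzbar_mul (hdbU z₀ hz₀) (diffAt_conj (diffAt_wdzbar hb2)),
      wdzbar_conj (diffAt_wdzbar hb2),
      wdz_wdzbar_comm hb2]
  -- the two key complex computations
  have key1 : (4 : ℂ) * (wdzbar (fun w => wdz (fun x => ((Complex.normSq (wdzbar h x) : ℝ) : ℂ)) w) z₀
        * (((Complex.normSq (wdzbar h z₀) : ℝ) : ℂ))⁻¹
      - wdz (fun x => ((Complex.normSq (wdzbar h x) : ℝ) : ℂ)) z₀
        * wdzbar (fun x => ((Complex.normSq (wdzbar h x) : ℝ) : ℂ)) z₀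
        * ((((Complex.normSq (wdzbar h z₀) : ℝ) : ℂ)) ^ 2)⁻¹)
      = ((-(4 * ((wdz h z₀ * wdzbar h z₀).re + Complex.normSq (wdz h z₀))) / (h z₀).im ^ 2 : ℝ) : ℂ) := by
    rw [hGN, hwdzN0, hwdzbarN0, hG, hP0]
    exact alg_N (wdz h z₀) (wdzbar h z₀) (wdzbar (fun x => wdzbar h x) z₀) ht.ne' hnz _ _ rfl rfl
  have key2 : (4 : ℂ) * (wdzbar (fun w => wdz (fun x => (((h x).im : ℝ) : ℂ)) w) z₀
        * ((((h z₀).im : ℝ) : ℂ))⁻¹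
      - wdz (fun x => (((h x).im : ℝ) : ℂ)) z₀ * wdzbar (fun x => (((h x).im : ℝ) : ℂ)) z₀
        * (((((h z₀).im : ℝ) : ℂ)) ^ 2)⁻¹)
      = ((-(Complex.normSq (wdz h z₀) + Complex.normSq (wdzbar h z₀)
          + 2 * (wdz h z₀ * wdzbar h z₀).re) / (h z₀).im ^ 2 : ℝ) : ℂ) := by
    rw [hGV, hP0, hE0, hwdzV z₀ hz₀, hwdzbarV z₀ hz₀]
    exact alg_V (wdz h z₀) (wdzbar h z₀) ht.ne' _ rfl
  rw [key1, key2, Complex.ofReal_re, Complex.ofReal_re, hL z₀, hH z₀,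
    Complex.sq_norm, Complex.sq_norm]
  field_simp
  ring
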